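/- Let ξ be a standard normal random variable. Then for every a ∈ ℝ and all 0 ≤ β ≤ α, |E[(a + √α·ξ)⁺ − (a + √β·ξ)⁺]| ≤ √(2/π) (√α − √β), where x⁺ = max(x, 0). -/

import Mathlib

/-!
Since `x ↦ max x 0` is 1-Lipschitz, the integrand is bounded pointwise by `(√α - √β) |ξ|`,
and the first absolute moment of a standard Gaussian is `E |ξ| = √(2 / π)`.
-/

open MeasureTheory ProbabilityTheory Real Set

lemma integral_Ioi_mul_exp_neg_mul_sq {b : ℝ} (hb : 0 < b) :
    ∫ x in Ioi (0 : ℝ), x * exp (-b * x ^ 2) = (2 * b)⁻¹ := by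
  have h := integral_mul_cexp_neg_mul_sq (b := (b : ℂ)) (by simpa using hb)
  rw [← Complex.ofReal_inj, ← integral_complex_ofReal]
  push_cast
  simpa only [Complex.ofReal_mul, Complex.ofReal_exp, Complex.ofReal_neg, Complex.ofReal_pow]
    using h

lemma integral_abs_gaussianReal (v : NNReal) :
    ∫ x, |x| ∂gaussianReal 0 v = √(2 * v / π) := by
  rcases eq_or_ne v 0 with rfl | hv
  · simp [gaussianReal_zero_var]
  have hsym : ∫ x : ℝ, |x| * exp (-(2 * (v : ℝ))⁻¹ * x ^ 2)
      = 2 * ∫ x in Ioi (0 : ℝ), x * exp (-(2 * (v : ℝ))⁻¹ * x ^ 2) := by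
    convert integral_comp_abs (f := fun x => x * exp (-(2 * (v : ℝ))⁻¹ * x ^ 2)) using 5
    rw [sq_abs]
  calc ∫ x, |x| ∂gaussianReal 0 v
      = (√(2 * π * v))⁻¹ * ∫ x : ℝ, |x| * exp (-(2 * (v : ℝ))⁻¹ * x ^ 2) := by
        rw [integral_gaussianReal_eq_integral_smul hv, ← integral_const_mul]
        congr 1 with x
        simp only [gaussianPDFReal_def, sub_zero, smul_eq_mul]
        ring_nf
    _ = √(2 * v / π) := by
        have h2v : 2 * (2 * (2 * (v : ℝ))⁻¹)⁻¹ = 2 * v := by field_simp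
        rw [hsym, integral_Ioi_mul_exp_neg_mul_sq (by positivity), h2v]
        rw [show 2 * (v : ℝ) / π = (2 * v) ^ 2 / (2 * π * v) by field_simp,
          sqrt_div (by positivity), sqrt_sq (by positivity)]
        ring

lemma abs_integral_max_sub_max_le {Ω : Type*} [MeasurableSpace Ω] {μ : Measure Ω} {ξ : Ω → ℝ}
    (hξ : Integrable ξ μ) (a s t : ℝ) :
    |∫ ω, (max (a + s * ξ ω) 0 - max (a + t * ξ ω) 0) ∂μ| ≤ |s - t| * ∫ ω, |ξ ω| ∂μ := by
  rw [← integral_const_mul]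
  refine norm_integral_le_of_norm_le (f := fun ω => max (a + s * ξ ω) 0 - max (a + t * ξ ω) 0)
    (hξ.abs.const_mul _) (ae_of_all _ fun ω => ?_)
  calc |max (a + s * ξ ω) 0 - max (a + t * ξ ω) 0|
      ≤ |(a + s * ξ ω) - (a + t * ξ ω)| := abs_max_sub_max_le_abs _ _ _
    _ = |s - t| * |ξ ω| := by rw [← abs_mul, sub_mul, add_sub_add_left_eq_sub]

theorem stmt16_general {Ω : Type*} [MeasurableSpace Ω] (P : Measure Ω)
    (ξ : Ω → ℝ) (hξmeas : Measurable ξ) (hξ : Measure.map ξ P = gaussianReal 0 1)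
    (a α β : ℝ) (hβα : β ≤ α) :
    |∫ ω, (max (a + Real.sqrt α * ξ ω) 0 - max (a + Real.sqrt β * ξ ω) 0) ∂P|
      ≤ Real.sqrt (2 / Real.pi) * (Real.sqrt α - Real.sqrt β) := by
  have hint : Integrable ξ P := by
    have : Integrable id (Measure.map ξ P) := hξ ▸ (memLp_id_gaussianReal 1).integrable le_rfl
    exact (integrable_map_measure aestronglyMeasurable_id hξmeas.aemeasurable).mp this
  have habs : ∫ ω, |ξ ω| ∂P = √(2 / π) := by
    rw [← integral_map hξmeas.aemeasurable continuous_abs.aestronglyMeasurable, hξ,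
      integral_abs_gaussianReal]
    norm_num
  have hsqrt : |√α - √β| = √α - √β := abs_of_nonneg (sub_nonneg.2 (sqrt_le_sqrt hβα))
  calc _ ≤ |√α - √β| * ∫ ω, |ξ ω| ∂P := abs_integral_max_sub_max_le hint a _ _
    _ = √(2 / π) * (√α - √β) := by rw [hsqrt, habs, mul_comm]

theorem stmt16 {Ω : Type*} [MeasurableSpace Ω] (P : Measure Ω) [IsProbabilityMeasure P]
    (ξ : Ω → ℝ) (hξmeas : Measurable ξ) (hξ : Measure.map ξ P = gaussianReal 0 1)
    (a α β : ℝ) (hβ : 0 ≤ β) (hβα : β ≤ α) :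
    |∫ ω, (max (a + Real.sqrt α * ξ ω) 0 - max (a + Real.sqrt β * ξ ω) 0) ∂P|
      ≤ Real.sqrt (2 / Real.pi) * (Real.sqrt α - Real.sqrt β) :=
  stmt16_general P ξ hξmeas hξ a α β hβα
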